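/- arXiv:1804.01034 — 2 statements merged into one kernel-verified Lean document; each statement's English description precedes it below -/
import Mathlib

section
/- Let L_h ≥ 0 and let h̃ : [0,1] → ℝ be L_h-Lipschitz with h̃(0) = 0. Then for all x, y ∈ [0,1] with x + y ≤ 1 and all δ ∈ (0,1), if x + y > 0 then |(x/(x+y))·h̃(x+y) − h̃(x)| ≤ 2·L_h·min(x, δ) + (2·L_h/δ)·x·y. -/
theorem lipschitz_fraction_bound (L_h : ℝ) (hL : 0 ≤ L_h) (h : ℝ → ℝ)
    (hLip : ∀ x ∈ Set.Icc (0:ℝ) 1, ∀ y ∈ Set.Icc (0:ℝ) 1, |h x - h y| ≤ L_h * |x - y|)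
    (h0 : h 0 = 0) :
    ∀ x y : ℝ, x ∈ Set.Icc (0:ℝ) 1 → y ∈ Set.Icc (0:ℝ) 1 → x + y ≤ 1 →
    ∀ δ : ℝ, δ ∈ Set.Ioo (0:ℝ) 1 → 0 < x + y →
      |(x / (x + y)) * h (x + y) - h x| ≤ 2 * L_h * min x δ + (2 * L_h / δ) * x * y := by
  intro x y hx hy hxy δ hδ hs
  obtain ⟨hx0, hx1⟩ := hx
  obtain ⟨hy0, hy1⟩ := hy
  obtain ⟨hδ0, hδ1⟩ := hδ
  have hsne : x + y ≠ 0 := ne_of_gt hs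
  have h1 : |h (x + y) - h x| ≤ L_h * y := by
    have := hLip (x + y) ⟨le_of_lt hs, hxy⟩ x ⟨hx0, hx1⟩
    have h2 : |x + y - x| = y := by rw [add_sub_cancel_left, abs_of_nonneg hy0]
    rwa [h2] at this
  have h2 : |h x| ≤ L_h * x := by
    have := hLip x ⟨hx0, hx1⟩ 0 ⟨le_refl 0, by norm_num⟩
    simpa [h0, abs_of_nonneg hx0] using this
  have key : |(x / (x + y)) * h (x + y) - h x| ≤ 2 * L_h * (x * y / (x + y)) := by
    have hrw : (x / (x + y)) * h (x + y) - h x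
        = (x / (x + y)) * (h (x + y) - h x) - (y / (x + y)) * h x := by
      field_simp; ring
    rw [hrw]
    have b1 : |(x / (x + y)) * (h (x + y) - h x)| ≤ (x / (x + y)) * (L_h * y) := by
      rw [abs_mul, abs_of_nonneg (div_nonneg hx0 hs.le)]
      exact mul_le_mul_of_nonneg_left h1 (div_nonneg hx0 hs.le)
    have b2 : |(y / (x + y)) * h x| ≤ (y / (x + y)) * (L_h * x) := by
      rw [abs_mul, abs_of_nonneg (div_nonneg hy0 hs.le)]
      exact mul_le_mul_of_nonneg_left h2 (div_nonneg hy0 hs.le)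
    calc |(x / (x + y)) * (h (x + y) - h x) - (y / (x + y)) * h x|
        ≤ |(x / (x + y)) * (h (x + y) - h x)| + |(y / (x + y)) * h x| := abs_sub _ _
      _ ≤ (x / (x + y)) * (L_h * y) + (y / (x + y)) * (L_h * x) := add_le_add b1 b2
      _ = 2 * L_h * (x * y / (x + y)) := by field_simp; ring
  rcases le_or_gt x δ with hle | hlt
  · have hmin : min x δ = x := min_eq_left hle
    have hb : x * y / (x + y) ≤ x := by
      rw [div_le_iff₀ hs]
      nlinarith
    have : 2 * L_h * (x * y / (x + y)) ≤ 2 * L_h * x :=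
      mul_le_mul_of_nonneg_left hb (by linarith)
    have hpos : 0 ≤ (2 * L_h / δ) * x * y := by positivity
    rw [hmin]; linarith
  · have hb : x * y / (x + y) ≤ x * y / δ := by
      apply div_le_div_of_nonneg_left (by positivity) hδ0
      linarith
    have : 2 * L_h * (x * y / (x + y)) ≤ (2 * L_h / δ) * x * y := by
      calc 2 * L_h * (x * y / (x + y)) ≤ 2 * L_h * (x * y / δ) :=
            mul_le_mul_of_nonneg_left hb (by linarith)
        _ = (2 * L_h / δ) * x * y := by field_simp
    have hpos : 0 ≤ 2 * L_h * min x δ := by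
      have : (0:ℝ) ≤ min x δ := le_min hx0 hδ0.le
      positivity
    linarith
end

section
/- Let L_f, L_h ≥ 0, μ ≥ 0, T ≥ 0, let a_k ∈ [0,∞) for k ∈ ℕ₀ with ∑_k a_k < ∞, and let u_k : [0,T] → [0,∞), k ∈ ℕ₀, be continuous functions with u_k(0) ≤ a_k satisfying for all k ∈ ℕ₀ and t ∈ [0,T]: u_k(t) ≤ a_k + 𝟙_{k=0}·2μt + ∫_0^t (L_f·u_{k−1}(s) + L_h·u_k(s)) ds, with the convention u_{−1} = 0. If additionally sup_{k} sup_{t∈[0,T]} u_k(t) < ∞, then ∑_{k∈ℕ₀} sup_{t∈[0,T]} u_k(t) ≤ e^{(L_f+L_h)T}·(∑_{k∈ℕ₀} a_k + 2μT). -/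
open MeasureTheory Set

lemma gronwall_aux (K δ T : ℝ) (hK : 0 ≤ K) (hδ : 0 ≤ δ) (hT : 0 ≤ T)
    (V : ℝ → ℝ) (hV : Continuous V) (hVnn : ∀ t, 0 ≤ V t)
    (hVineq : ∀ t ∈ Set.Icc (0:ℝ) T, V t ≤ δ + ∫ s in (0:ℝ)..t, K * V s) :
    δ + (∫ s in (0:ℝ)..T, K * V s) ≤ δ * Real.exp (K * T) := by
  set F : ℝ → ℝ := fun t => ∫ s in (0:ℝ)..t, V s with hFdef
  have hderiv : ∀ t : ℝ, HasDerivAt F (V t) t := fun t =>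
    intervalIntegral.integral_hasDerivAt_right (hV.intervalIntegrable 0 t)
      (hV.stronglyMeasurableAtFilter _ _) hV.continuousAt
  have hFnn : ∀ t ∈ Set.Icc (0:ℝ) T, 0 ≤ F t := fun t ht =>
    intervalIntegral.integral_nonneg ht.1 (fun s _ => hVnn s)
  have hKF : ∀ t : ℝ, (∫ s in (0:ℝ)..t, K * V s) = K * F t := fun t =>
    intervalIntegral.integral_const_mul K V
  have key : ∀ t ∈ Set.Icc (0:ℝ) T, ‖F t‖ ≤ gronwallBound 0 K δ (t - 0) := by
    apply norm_le_gronwallBound_of_norm_deriv_right_le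
      (fun t _ => (hderiv t).continuousAt.continuousWithinAt)
      (fun t _ => (hderiv t).hasDerivWithinAt)
    · simp [hFdef]
    · intro t ht
      have h1 : V t ≤ δ + K * F t := by
        rw [← hKF t]; exact hVineq t (Set.Ico_subset_Icc_self ht)
      have h2 : 0 ≤ F t := hFnn t (Set.Ico_subset_Icc_self ht)
      rw [Real.norm_eq_abs, Real.norm_eq_abs, abs_of_nonneg (hVnn t), abs_of_nonneg h2]
      linarith
  have hFT := key T (Set.right_mem_Icc.2 hT)
  rw [Real.norm_eq_abs, abs_of_nonneg (hFnn T (Set.right_mem_Icc.2 hT))] at hFT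
  rw [hKF T]
  rcases eq_or_lt_of_le hK with hK0 | hKpos
  · rw [← hK0]
    simp
  · have hgb : gronwallBound 0 K δ (T - 0) = δ / K * (Real.exp (K * T) - 1) := by
      rw [gronwallBound_of_K_ne_0 hKpos.ne']
      ring_nf
    rw [hgb] at hFT
    have hKne : K ≠ 0 := hKpos.ne'
    have hexp : 1 ≤ Real.exp (K * T) := Real.one_le_exp (by positivity)
    have heq : K * (δ / K * (Real.exp (K * T) - 1)) = δ * (Real.exp (K * T) - 1) := by
      field_simp
    nlinarith [mul_le_mul_of_nonneg_left hFT hKpos.le]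

set_option maxHeartbeats 400000 in
theorem summable_levels_gronwall (L_f L_h μ T : ℝ) (hLf : 0 ≤ L_f) (hLh : 0 ≤ L_h)
    (hμ : 0 ≤ μ) (hT : 0 ≤ T) (a : ℕ → ℝ) (ha : ∀ k, 0 ≤ a k) (hsum : Summable a)
    (u : ℕ → ℝ → ℝ) (hu : ∀ k, ContinuousOn (u k) (Set.Icc 0 T))
    (hnn : ∀ k, ∀ t ∈ Set.Icc (0:ℝ) T, 0 ≤ u k t)
    (h0 : ∀ k, u k 0 ≤ a k)
    (hineq : ∀ k, ∀ t ∈ Set.Icc (0:ℝ) T,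
      u k t ≤ a k + (if k = 0 then 2 * μ * t else 0)
        + ∫ s in (0:ℝ)..t,
            (L_f * (if k = 0 then 0 else u (k - 1) s) + L_h * u k s))
    (hbdd : ∃ C : ℝ, ∀ k, ∀ t ∈ Set.Icc (0:ℝ) T, u k t ≤ C) :
    ∑' k : ℕ, (⨆ t ∈ Set.Icc (0:ℝ) T, u k t)
      ≤ Real.exp ((L_f + L_h) * T) * ((∑' k : ℕ, a k) + 2 * μ * T) := by
  set K := L_f + L_h with hKdef
  have hK : 0 ≤ K := add_nonneg hLf hLh
  set A := ∑' k, a k with hAdef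
  have hAnn : 0 ≤ A := tsum_nonneg ha
  set δ := A + 2 * μ * T with hδdef
  have hδ : 0 ≤ δ := by positivity
  -- the integrands
  set g : ℕ → ℝ → ℝ :=
    fun k s => L_f * (if k = 0 then 0 else u (k - 1) s) + L_h * u k s with hgdef
  have hgcont : ∀ k, ContinuousOn (g k) (Set.Icc 0 T) := by
    intro k
    apply ContinuousOn.add _ ((hu k).const_smul L_h)
    rcases k with _ | m
    · simpa using continuousOn_const
    · simp only [g, Nat.succ_ne_zero, if_false]
      exact (hu m).const_smul L_f
  have hgnn : ∀ k, ∀ s ∈ Set.Icc (0:ℝ) T, 0 ≤ g k s := by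
    intro k s hs
    apply add_nonneg _ (mul_nonneg hLh (hnn k s hs))
    rcases k with _ | m
    · simp
    · simp only [g, Nat.succ_ne_zero, if_false]
      exact mul_nonneg hLf (hnn m s hs)
  have hsub : ∀ t ∈ Set.Icc (0:ℝ) T, Set.uIcc (0:ℝ) t ⊆ Set.Icc 0 T := by
    intro t ht
    rw [Set.uIcc_of_le ht.1]
    exact Set.Icc_subset_Icc le_rfl ht.2
  have hgint : ∀ k, ∀ t ∈ Set.Icc (0:ℝ) T, IntervalIntegrable (g k) volume 0 t :=
    fun k t ht => ((hgcont k).mono (hsub t ht)).intervalIntegrable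
  -- bound for sup over [0,T] in terms of value at T
  have hTmem : T ∈ Set.Icc (0:ℝ) T := Set.right_mem_Icc.2 hT
  have hineq' : ∀ k, ∀ t ∈ Set.Icc (0:ℝ) T,
      u k t ≤ a k + (if k = 0 then 2 * μ * t else 0) + ∫ s in (0:ℝ)..t, g k s := hineq
  have hsk : ∀ k, (⨆ t ∈ Set.Icc (0:ℝ) T, u k t)
      ≤ a k + (if k = 0 then 2 * μ * T else 0) + ∫ s in (0:ℝ)..T, g k s := by
    intro k
    have hRHSnn : 0 ≤ a k + (if k = 0 then 2 * μ * T else 0) + ∫ s in (0:ℝ)..T, g k s := by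
      have h1 : 0 ≤ ∫ s in (0:ℝ)..T, g k s :=
        intervalIntegral.integral_nonneg hT (fun s hs => hgnn k s hs)
      have h2 : 0 ≤ (if k = 0 then 2 * μ * T else 0) := by positivity
      linarith [ha k]
    refine Real.iSup_le (fun t => Real.iSup_le (fun ht => ?_) hRHSnn) hRHSnn
    have h1 : u k t ≤ a k + (if k = 0 then 2 * μ * t else 0) + ∫ s in (0:ℝ)..t, g k s :=
      hineq' k t ht
    have h2 : (∫ s in (0:ℝ)..t, g k s) ≤ ∫ s in (0:ℝ)..T, g k s := by
      have hint2 : IntervalIntegrable (g k) volume t T := by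
        apply ((hgcont k).mono _).intervalIntegrable
        rw [Set.uIcc_of_le ht.2]
        exact Set.Icc_subset_Icc ht.1 le_rfl
      have hsplit := intervalIntegral.integral_add_adjacent_intervals (hgint k t ht) hint2
      have hpos : 0 ≤ ∫ s in t..T, g k s :=
        intervalIntegral.integral_nonneg ht.2 (fun s hs => hgnn k s ⟨ht.1.trans hs.1, hs.2⟩)
      linarith
    have h3 : (if k = 0 then 2 * μ * t else 0) ≤ (if k = 0 then 2 * μ * T else 0) := by
      split_ifs
      · nlinarith [ht.2]
      · exact le_refl 0
    calc u k t ≤ a k + (if k = 0 then 2 * μ * t else 0) + ∫ s in (0:ℝ)..t, g k s := h1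
      _ ≤ a k + (if k = 0 then 2 * μ * T else 0) + ∫ s in (0:ℝ)..T, g k s := by
          linarith
  clear_value K A δ g
  -- main finite-sum bound
  have main : ∀ n, ∑ k ∈ Finset.range n, (⨆ t ∈ Set.Icc (0:ℝ) T, u k t)
      ≤ δ * Real.exp (K * T) := by
    intro n
    -- clamp
    set c : ℝ → ℝ := fun t => max 0 (min t T) with hcdef
    have hcmem : ∀ t, c t ∈ Set.Icc (0:ℝ) T := by
      intro t
      constructor
      · exact le_max_left _ _
      · exact max_le hT (min_le_right _ _)
    have hceq : ∀ t ∈ Set.Icc (0:ℝ) T, c t = t := by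
      intro t ht
      simp only [hcdef]
      rw [min_eq_left ht.2, max_eq_right ht.1]
    have hccont : Continuous c := continuous_const.max (continuous_id.min continuous_const)
    set V : ℝ → ℝ := fun t => ∑ k ∈ Finset.range n, u k (c t) with hVdef
    have hVcont : Continuous V :=
      continuous_finset_sum _ fun k _ => (hu k).comp_continuous hccont hcmem
    have hVnn : ∀ t, 0 ≤ V t := fun t => Finset.sum_nonneg fun k _ => hnn k _ (hcmem t)
    have hVeq : ∀ t ∈ Set.Icc (0:ℝ) T, V t = ∑ k ∈ Finset.range n, u k t := by
      intro t ht
      simp only [hVdef, hceq t ht]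
    clear_value V
    -- pointwise bound on the sums of integrands
    have hgsum : ∀ s ∈ Set.Icc (0:ℝ) T, ∑ k ∈ Finset.range n, g k s ≤ K * V s := by
      intro s hs
      have hS1 : ∑ k ∈ Finset.range n, (if k = 0 then 0 else u (k - 1) s)
          ≤ ∑ k ∈ Finset.range n, u k s := by
        rcases n with _ | m
        · simp
        · rw [Finset.sum_range_succ']
          simp only [Nat.succ_ne_zero, if_false, Nat.add_sub_cancel, eq_self_iff_true,
            if_true, add_zero]
          apply Finset.sum_le_sum_of_subset_of_nonneg
            (Finset.range_subset_range.2 (Nat.le_succ m))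
          exact fun k hk _ => hnn k s hs
      have : ∑ k ∈ Finset.range n, g k s
          = L_f * (∑ k ∈ Finset.range n, (if k = 0 then 0 else u (k - 1) s))
            + L_h * (∑ k ∈ Finset.range n, u k s) := by
        simp only [hgdef]
        rw [Finset.sum_add_distrib, ← Finset.mul_sum, ← Finset.mul_sum]
      rw [this, hVeq s hs, hKdef]
      have hnn2 : 0 ≤ ∑ k ∈ Finset.range n, u k s :=
        Finset.sum_nonneg fun k _ => hnn k s hs
      nlinarith [mul_le_mul_of_nonneg_left hS1 hLf]
    -- key summed inequality
    have key : ∀ t ∈ Set.Icc (0:ℝ) T,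
        ∑ k ∈ Finset.range n, (a k + (if k = 0 then 2 * μ * t else 0)
            + ∫ s in (0:ℝ)..t, g k s)
          ≤ δ + ∫ s in (0:ℝ)..t, K * V s := by
      intro t ht
      have e1 : ∑ k ∈ Finset.range n, (a k + (if k = 0 then 2 * μ * t else 0)
            + ∫ s in (0:ℝ)..t, g k s)
          = (∑ k ∈ Finset.range n, a k)
            + (∑ k ∈ Finset.range n, (if k = 0 then 2 * μ * t else 0))
            + (∑ k ∈ Finset.range n, ∫ s in (0:ℝ)..t, g k s) := by
        rw [Finset.sum_add_distrib, Finset.sum_add_distrib]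
      have b1 : ∑ k ∈ Finset.range n, a k ≤ A := by
        rw [hAdef]; exact Summable.sum_le_tsum _ (fun k _ => ha k) hsum
      have b2 : (∑ k ∈ Finset.range n, (if k = 0 then 2 * μ * t else 0)) ≤ 2 * μ * T := by
        rw [Finset.sum_ite_eq' (Finset.range n) 0 (fun _ => 2 * μ * t)]
        split_ifs
        · nlinarith [ht.2]
        · positivity
      have b3 : (∑ k ∈ Finset.range n, ∫ s in (0:ℝ)..t, g k s)
          ≤ ∫ s in (0:ℝ)..t, K * V s := by
        rw [← intervalIntegral.integral_finset_sum (fun k _ => hgint k t ht)]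
        apply intervalIntegral.integral_mono_on ht.1
        · exact ((continuousOn_finset_sum (Finset.range n)
              (fun k _ => hgcont k)).mono (hsub t ht)).intervalIntegrable
        · exact (continuous_const.mul hVcont).intervalIntegrable 0 t
        · intro s hs
          exact hgsum s ⟨hs.1, hs.2.trans ht.2⟩
      rw [e1, hδdef]
      linarith
    -- Gronwall for V
    have hVineq : ∀ t ∈ Set.Icc (0:ℝ) T, V t ≤ δ + ∫ s in (0:ℝ)..t, K * V s := by
      intro t ht
      rw [hVeq t ht]
      refine le_trans (Finset.sum_le_sum fun k _ => ?_) (key t ht)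
      exact hineq' k t ht
    have hgron := gronwall_aux K δ T hK hδ hT V hVcont hVnn hVineq
    calc ∑ k ∈ Finset.range n, (⨆ t ∈ Set.Icc (0:ℝ) T, u k t)
        ≤ ∑ k ∈ Finset.range n, (a k + (if k = 0 then 2 * μ * T else 0)
            + ∫ s in (0:ℝ)..T, g k s) := Finset.sum_le_sum fun k _ => hsk k
      _ ≤ δ + ∫ s in (0:ℝ)..T, K * V s := key T hTmem
      _ ≤ δ * Real.exp (K * T) := hgron
  have hnnsup : ∀ k, 0 ≤ ⨆ t ∈ Set.Icc (0:ℝ) T, u k t := fun k =>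
    Real.iSup_nonneg fun t => Real.iSup_nonneg fun ht => hnn k t ht
  have := Real.tsum_le_of_sum_range_le hnnsup main
  calc ∑' k : ℕ, (⨆ t ∈ Set.Icc (0:ℝ) T, u k t) ≤ δ * Real.exp (K * T) := this
    _ = Real.exp (K * T) * δ := mul_comm _ _
end
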